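/- Let k⁰⁰, k¹¹, k²² > 0, ρ > 0 and ξ > 0, and set d = k⁰⁰·k²²/(k¹¹)². Define f : (0,∞) → ℝ by f(c) = c·k⁰⁰ + c^{−1}·2·k¹¹·ρ·ξ² + c^{−3}·k²²·ξ⁴, and set c* = ξ·( ρ·(k¹¹/k⁰⁰)·(1 + (1 + 3d/ρ²)^{1/2}) )^{1/2}. Then f(c) ≥ f(c*) for every c > 0, and f(c*) = (4/3)·ξ·(ρ·k⁰⁰·k¹¹)^{1/2}·(1/p(ρ) + p(ρ)) = ξ·g(ρ)/4; in particular, for T > 0 and a positive continuous σ on [0,T], with ξ² = a²/(T·∫₀^T σ(u)⁴ du)^{1/2}, the minimum over c > 0 of 4·T·(∫₀^T σ(u)⁴ du)·f(c) equals a·(T·∫₀^T σ(u)⁴ du)^{3/4}·g(ρ). -/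

import Mathlib

open MeasureTheory

/-- `p(ρ) = (1 + (1 + 3d/ρ²)^{1/2})^{1/2}` with `d = k⁰⁰k²²/(k¹¹)²`. -/
noncomputable def pKer (k00 k11 k22 ρ : ℝ) : ℝ :=
  (1 + (1 + 3 * (k00 * k22 / k11 ^ 2) / ρ ^ 2) ^ ((1 : ℝ) / 2)) ^ ((1 : ℝ) / 2)

/-- `g(ρ) = (16/3)(ρ k⁰⁰ k¹¹)^{1/2}(1/p(ρ) + p(ρ))`. -/
noncomputable def gKer (k00 k11 k22 ρ : ℝ) : ℝ :=
  (16 / 3) * (ρ * k00 * k11) ^ ((1 : ℝ) / 2) *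
    (1 / pKer k00 k11 k22 ρ + pKer k00 k11 k22 ρ)

/-- `f(c) = c·k⁰⁰ + c⁻¹·2k¹¹ρξ² + c⁻³·k²²ξ⁴`. -/
noncomputable def fRK (k00 k11 k22 ρ ξ c : ℝ) : ℝ :=
  c * k00 + c⁻¹ * 2 * k11 * ρ * ξ ^ 2 + (c ^ 3)⁻¹ * k22 * ξ ^ 4

/-- Optimal bandwidth constant `c* = ξ(ρ(k¹¹/k⁰⁰)(1 + (1 + 3d/ρ²)^{1/2}))^{1/2}`. -/
noncomputable def cstarRK (k00 k11 k22 ρ ξ : ℝ) : ℝ :=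
  ξ * (ρ * (k11 / k00) *
    (1 + (1 + 3 * (k00 * k22 / k11 ^ 2) / ρ ^ 2) ^ ((1 : ℝ) / 2))) ^ ((1 : ℝ) / 2)


private lemma eq_of_sq' {a b : ℝ} (ha : 0 ≤ a) (hb : 0 ≤ b) (h : a^2 = b^2) : a = b := by
  nlinarith [sq_nonneg (a-b)]

private lemma rpow_half_sq {x : ℝ} (hx : 0 ≤ x) : (x ^ ((1:ℝ)/2))^2 = x := by
  rw [← Real.rpow_natCast (x ^ ((1:ℝ)/2)) 2, ← Real.rpow_mul hx]; norm_num

private lemma aux_min {A B C s c : ℝ} (hA : 0 < A) (hC : 0 < C) (hs : 0 < s)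
    (hkey : A*s^4 = B*s^2 + 3*C) (hc : 0 < c) :
    A*s + B/s + C/s^3 ≤ A*c + B/c + C/c^3 := by
  rw [← sub_nonneg]
  have key : (A*c + B/c + C/c^3) - (A*s + B/s + C/s^3)
      = (c-s)^2*(A*s^3*c^2 + 2*C*c + C*s)/(c^3*s^3) := by
    field_simp
    ring_nf
    linear_combination (c^3 - c^2*s) * hkey
  rw [key]
  positivity


/-- Minimization of the RK bandwidth trade-off: `c*` is the minimizer of `f`,
`f(c*) = (4/3)ξ(ρk⁰⁰k¹¹)^{1/2}(1/p(ρ) + p(ρ)) = ξ g(ρ)/4`, and consequently the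
minimal RK asymptotic variance is `a(T∫σ⁴)^{3/4} g(ρ)`. -/
theorem stmt6 (k00 k11 k22 ρ ξ : ℝ) (h00 : 0 < k00) (h11 : 0 < k11)
    (h22 : 0 < k22) (hρ : 0 < ρ) (hξ : 0 < ξ) :
    (∀ c > (0 : ℝ), fRK k00 k11 k22 ρ ξ c ≥ fRK k00 k11 k22 ρ ξ (cstarRK k00 k11 k22 ρ ξ)) ∧
    fRK k00 k11 k22 ρ ξ (cstarRK k00 k11 k22 ρ ξ)
      = (4 / 3) * ξ * (ρ * k00 * k11) ^ ((1 : ℝ) / 2) *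
          (1 / pKer k00 k11 k22 ρ + pKer k00 k11 k22 ρ) ∧
    fRK k00 k11 k22 ρ ξ (cstarRK k00 k11 k22 ρ ξ) = ξ * gKer k00 k11 k22 ρ / 4 ∧
    ∀ (T a : ℝ) (σ : ℝ → ℝ), 0 < T → 0 < a →
      ContinuousOn σ (Set.Icc 0 T) → (∀ u ∈ Set.Icc 0 T, 0 < σ u) →
      ξ ^ 2 = a ^ 2 / (T * ∫ u in (0:ℝ)..T, σ u ^ 4) ^ ((1 : ℝ) / 2) →
      IsLeast
        ((fun c => 4 * T * (∫ u in (0:ℝ)..T, σ u ^ 4) * fRK k00 k11 k22 ρ ξ c) ''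
          Set.Ioi 0)
        (a * (T * ∫ u in (0:ℝ)..T, σ u ^ 4) ^ ((3 : ℝ) / 4) * gKer k00 k11 k22 ρ) := by
  -- notation
  set r : ℝ := (1 + 3 * (k00 * k22 / k11 ^ 2) / ρ ^ 2) ^ ((1:ℝ)/2) with hrdef
  have hrbase : (0:ℝ) < 1 + 3 * (k00 * k22 / k11 ^ 2) / ρ ^ 2 := by positivity
  have hr : 0 < r := Real.rpow_pos_of_pos hrbase _
  have hr2 : r ^ 2 = 1 + 3 * (k00 * k22 / k11 ^ 2) / ρ ^ 2 := rpow_half_sq hrbase.le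
  have hr2' : k11 ^ 2 * ρ ^ 2 * r ^ 2 = k11 ^ 2 * ρ ^ 2 + 3 * k00 * k22 := by
    rw [hr2]; field_simp
  set p : ℝ := pKer k00 k11 k22 ρ with hpdef
  have hpeq : p = (1 + r) ^ ((1:ℝ)/2) := rfl
  have hp : 0 < p := by rw [hpeq]; exact Real.rpow_pos_of_pos (by positivity) _
  have hp2 : p ^ 2 = 1 + r := by rw [hpeq]; exact rpow_half_sq (by positivity)
  set w : ℝ := (ρ * k00 * k11) ^ ((1:ℝ)/2) with hwdef
  have hw : 0 < w := Real.rpow_pos_of_pos (by positivity) _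
  have hw2 : w ^ 2 = ρ * k00 * k11 := rpow_half_sq (by positivity)
  set s : ℝ := cstarRK k00 k11 k22 ρ ξ with hsdef
  have hXpos : (0:ℝ) < ρ * (k11 / k00) * (1 + r) := by positivity
  have hseq : s = ξ * (ρ * (k11 / k00) * (1 + r)) ^ ((1:ℝ)/2) := rfl
  have hs : 0 < s := by rw [hseq]; positivity
  have hs2 : s ^ 2 = ξ ^ 2 * (ρ * (k11 / k00) * (1 + r)) := by
    rw [hseq, mul_pow, rpow_half_sq hXpos.le]
  -- key identity A s⁴ = B s² + 3C
  have hkey : k00 * s ^ 4 = (2*k11*ρ*ξ^2) * s ^ 2 + 3 * (k22 * ξ ^ 4) := by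
    have h4 : s ^ 4 = (s ^ 2) ^ 2 := by ring
    rw [h4, hs2]
    field_simp
    linear_combination hr2'
  -- f rewritten
  have hfval : ∀ c : ℝ, fRK k00 k11 k22 ρ ξ c = k00 * c + (2*k11*ρ*ξ^2)/c + (k22*ξ^4)/c^3 := by
    intro c; unfold fRK; ring
  -- part 1
  have part1 : ∀ c > (0:ℝ), fRK k00 k11 k22 ρ ξ c ≥ fRK k00 k11 k22 ρ ξ s := by
    intro c hc
    rw [ge_iff_le, hfval, hfval]
    exact aux_min h00 (by positivity) hs hkey hc
  -- closed form of f(s)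
  have hks : k00 * s = ξ * w * p := by
    apply eq_of_sq' (by positivity) (by positivity)
    rw [mul_pow, mul_pow, mul_pow, hs2, hw2, hp2]
    field_simp
  have hws : w * s = ξ * ρ * k11 * p := by
    apply eq_of_sq' (by positivity) (by positivity)
    rw [mul_pow, mul_pow, mul_pow, mul_pow, hs2, hw2, hp2]
    field_simp
  have hb : (2*k11*ρ*ξ^2)/s = 2*ξ*w/p := by
    rw [div_eq_div_iff hs.ne' hp.ne']
    linear_combination (-2*ξ) * hws
  have hcc : (k22*ξ^4)/s^3 = k00*s/3 - ((2*k11*ρ*ξ^2)/s)/3 := by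
    field_simp
    linear_combination (-1) * hkey
  have part2 : fRK k00 k11 k22 ρ ξ s = (4/3) * ξ * w * (1/p + p) := by
    rw [hfval, hcc, hb, hks]
    field_simp
    ring
  refine ⟨part1, part2, ?_, ?_⟩
  · rw [part2]
    unfold gKer
    rw [← hwdef, ← hpdef]
    ring
  · intro T a σ hT ha hσc hσp hξ2
    set I : ℝ := ∫ u in (0:ℝ)..T, σ u ^ 4 with hIdef
    have hI : 0 < I := by
      apply intervalIntegral.intervalIntegral_pos_of_pos_on
      · apply ContinuousOn.intervalIntegrable
        rw [Set.uIcc_of_le hT.le]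
        exact (hσc.pow 4)
      · intro u hu
        have := hσp u ⟨hu.1.le, hu.2.le⟩
        positivity
      · exact hT
    have hTI : 0 < T * I := by positivity
    have hscale : T * I * ξ = a * (T * I) ^ ((3:ℝ)/4) := by
      apply eq_of_sq' (by positivity) (by positivity)
      have h34 : ((T*I) ^ ((3:ℝ)/4)) ^ 2 = (T*I) ^ ((3:ℝ)/2) := by
        rw [← Real.rpow_natCast ((T*I) ^ ((3:ℝ)/4)) 2, ← Real.rpow_mul hTI.le]; norm_num
      have h12 : (T*I) ^ 2 / (T*I) ^ ((1:ℝ)/2) = (T*I) ^ ((3:ℝ)/2) := by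
        rw [← Real.rpow_natCast (T*I) 2, ← Real.rpow_sub hTI]; norm_num
      rw [mul_pow (T*I) ξ, mul_pow a ((T*I) ^ ((3:ℝ)/4)), hξ2, h34, ← h12]
      ring
    have hval : ∀ c : ℝ, 4 * T * I * fRK k00 k11 k22 ρ ξ s
        = a * (T*I) ^ ((3:ℝ)/4) * gKer k00 k11 k22 ρ := by
      intro c
      rw [part2]
      unfold gKer
      rw [← hwdef, ← hpdef]
      linear_combination (16/3 * w * (1/p + p)) * hscale
    constructor
    · exact ⟨s, hs, by simpa using hval 0⟩
    · rintro y ⟨c, hc, rfl⟩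
      show a * (T*I) ^ ((3:ℝ)/4) * gKer k00 k11 k22 ρ ≤ 4 * T * I * fRK k00 k11 k22 ρ ξ c
      rw [← hval 0]
      exact mul_le_mul_of_nonneg_left (part1 c hc) (by positivity)
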